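/- Let F be a field, k ≥ 1 a natural number, and let x, y : {1,...,k²} → F be such that x is injective, y is injective, and x(i) ≠ y(j) for all i, j. Let G be the k²×k² Cauchy matrix with entries 1/(x(i) − y(j)), with rows and columns reindexed by pairs in {1,...,k}×{1,...,k}. Let m, m' : {1,...,k}×{1,...,k} → F and set p = Gm, p' = Gm'. Then: (1) for any subsets S, T of {1,...,k} with |S| + |T| = k, if m and m' agree on all coordinates (j,s) with j ∈ S and p and p' agree on all coordinates (j,s) with j ∈ T, then m = m'; (2) for any fixed i, if m and m' agree on all coordinates (j,s) with j ≠ i and p(j,k) = p'(j,k) for all j, then m = m'; and (3) for any fixed i, if m(j,k) = m'(j,k) for all j and p and p' agree on all coordinates (j,s) with j ≠ i, then m = m'. (In other words, Construction 1 with a Cauchy encoding matrix yields an exact-repair MSR code for the [n,k,L]=[2k,k,2] clustered distributed storage system with ε = 1/(n−k).) -/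

import Mathlib

open Polynomial Finset

/-- Core lemma: a Cauchy linear system has trivial kernel. -/
lemma cauchy_kernel {F : Type*} [Field F] {n : Type*} [Fintype n] [DecidableEq n]
    (x y : n → F) (hx : Function.Injective x) (hy : Function.Injective y)
    (hxy : ∀ i j, x i ≠ y j) (d : n → F)
    (h : ∀ i, ∑ j, (x i - y j)⁻¹ * d j = 0) : ∀ j, d j = 0 := by
  cases isEmpty_or_nonempty n with
  | inl hE => intro j; exact absurd (Nonempty.intro j) (not_nonempty_iff.mpr hE)
  | inr hN =>
  set P : F[X] := ∑ j, C (d j) * ∏ l ∈ univ.erase j, (X - C (y l)) with hP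
  have hPdeg : P.natDegree < Fintype.card n := by
    have : P.natDegree ≤ Fintype.card n - 1 := by
      apply natDegree_sum_le_of_forall_le
      intro j _
      calc (C (d j) * ∏ l ∈ univ.erase j, (X - C (y l))).natDegree
          ≤ (∏ l ∈ univ.erase j, (X - C (y l))).natDegree := natDegree_C_mul_le _ _
        _ ≤ ∑ l ∈ univ.erase j, (X - C (y l)).natDegree := natDegree_prod_le _ _
        _ ≤ Fintype.card n - 1 := by
            simp [natDegree_X_sub_C, Finset.card_erase_of_mem]
    have h1 : 1 ≤ Fintype.card n := Fintype.card_pos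
    omega
  have hPeval : ∀ i, P.eval (x i) = 0 := by
    intro i
    have key : P.eval (x i) = (∏ l, (x i - y l)) * ∑ j, (x i - y j)⁻¹ * d j := by
      rw [hP, Finset.mul_sum]
      simp only [eval_finset_sum, eval_mul, eval_C, eval_prod, eval_sub, eval_X]
      refine Finset.sum_congr rfl fun j _ => ?_
      have hne : x i - y j ≠ 0 := sub_ne_zero.mpr (hxy i j)
      rw [← Finset.mul_prod_erase univ (fun l => x i - y l) (Finset.mem_univ j)]
      field_simp
    rw [key, h i, mul_zero]
  have hP0 : P = 0 :=
    eq_zero_of_natDegree_lt_card_of_eval_eq_zero P hx hPeval hPdeg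
  intro j
  have := congrArg (Polynomial.eval (y j)) hP0
  rw [hP] at this
  simp only [eval_finset_sum, eval_mul, eval_C, eval_prod, eval_sub, eval_X, eval_zero] at this
  rw [Finset.sum_eq_single j] at this
  · have hprod : (∏ l ∈ univ.erase j, (y j - y l)) ≠ 0 := by
      apply Finset.prod_ne_zero_iff.mpr
      intro l hl
      exact sub_ne_zero.mpr fun hEq => (Finset.mem_erase.mp hl).1 (hy hEq.symm)
    exact (mul_eq_zero.mp this).resolve_right hprod
  · intro b _ hbj
    rw [Finset.prod_eq_zero (Finset.mem_erase.mpr ⟨Ne.symm hbj, Finset.mem_univ j⟩)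
      (sub_self (y j)), mul_zero]
  · intro hj; exact absurd (Finset.mem_univ j) hj

/-- Submatrix version: if `d` is supported on a column set `C` and the Cauchy
sums vanish on a row set `R` of the same cardinality, then `d = 0`. -/
lemma cauchy_sub {F : Type*} [Field F] {ι : Type*} [Fintype ι] [DecidableEq ι]
    (X Y : ι → F) (hX : Function.Injective X) (hY : Function.Injective Y)
    (hXY : ∀ i j, X i ≠ Y j) (R C : Finset ι) (hcard : R.card = C.card)
    (d : ι → F) (hd : ∀ b ∉ C, d b = 0)
    (h : ∀ r ∈ R, ∑ b, (X r - Y b)⁻¹ * d b = 0) : d = 0 := by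
  have e : (R : Type _) ≃ (C : Type _) := Finset.equivOfCardEq hcard
  have key : ∀ c : C, d c = 0 := by
    apply cauchy_kernel (fun c : C => X (e.symm c)) (fun c : C => Y c)
      (fun a b hab => e.symm.injective (Subtype.ext (hX hab)))
      (fun a b hab => Subtype.ext (hY hab))
      (fun i j => hXY _ _)
    intro i
    have : ∑ b ∈ C, (X (e.symm i) - Y b)⁻¹ * d b = ∑ b, (X (e.symm i) - Y b)⁻¹ * d b := by
      apply Finset.sum_subset (Finset.subset_univ C)
      intro b _ hb
      rw [hd b hb, mul_zero]
    rw [← Finset.sum_coe_sort C] at this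
    rw [this]
    exact h _ (e.symm i).2
  funext b
  by_cases hb : b ∈ C
  · exact key ⟨b, hb⟩
  · exact hd b hb

/-- Helper: any square-submatrix condition on the Cauchy-encoded code forces
equality of the message vectors. -/
lemma cauchy_msr_helper {F : Type*} [Field F] {k : ℕ}
    (x y : Fin (k * k) → F)
    (hx : Function.Injective x) (hy : Function.Injective y)
    (hxy : ∀ i j : Fin (k * k), x i ≠ y j)
    (G : Matrix (Fin k × Fin k) (Fin k × Fin k) F)
    (hGdef : ∀ a b : Fin k × Fin k,
      G a b = (x (finProdFinEquiv a) - y (finProdFinEquiv b))⁻¹)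
    (m m' : Fin k × Fin k → F) (R C : Finset (Fin k × Fin k))
    (hcard : R.card = C.card)
    (hd : ∀ b ∉ C, m b = m' b)
    (hR : ∀ r ∈ R, G.mulVec m r = G.mulVec m' r) : m = m' := by
  have hzero : (fun b => m b - m' b) = 0 := by
    apply cauchy_sub (fun a => x (finProdFinEquiv a)) (fun a => y (finProdFinEquiv a))
      (hx.comp finProdFinEquiv.injective) (hy.comp finProdFinEquiv.injective)
      (fun i j => hxy _ _) R C hcard
    · intro b hb
      rw [hd b hb, sub_self]
    · intro r hr
      have := hR r hr
      simp only [Matrix.mulVec, dotProduct] at this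
      have expand : ∑ b, (x (finProdFinEquiv r) - y (finProdFinEquiv b))⁻¹ * (m b - m' b)
          = (∑ b, G r b * m b) - ∑ b, G r b * m' b := by
        rw [← Finset.sum_sub_distrib]
        refine Finset.sum_congr rfl fun b _ => ?_
        rw [hGdef r b]
        ring
      rw [expand, this, sub_self]
  funext b
  have := congrFun hzero b
  simpa [sub_eq_zero] using this

/-- Construction 1 with a Cauchy encoding matrix yields an exact-repair MSR code
for the `[n,k,L] = [2k,k,2]` clustered DSS with `ε = 1/(n-k)`:
(1) data reconstruction from any `k` of the `2k` nodes,
(2) exact regeneration of any systematic node, and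
(3) exact regeneration of any parity node. -/
theorem cauchy_construction_is_MSR
    {F : Type*} [Field F] {k : ℕ} (hk : 1 ≤ k)
    (x y : Fin (k * k) → F)
    (hx : Function.Injective x) (hy : Function.Injective y)
    (hxy : ∀ i j : Fin (k * k), x i ≠ y j)
    (G : Matrix (Fin k × Fin k) (Fin k × Fin k) F)
    (hGdef : ∀ a b : Fin k × Fin k,
      G a b = (x (finProdFinEquiv a) - y (finProdFinEquiv b))⁻¹) :
    -- (1) data reconstruction (MDS property)
    (∀ (m m' p p' : Fin k × Fin k → F), p = G.mulVec m → p' = G.mulVec m' →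
      ∀ (S T : Finset (Fin k)), S.card + T.card = k →
        (∀ j ∈ S, ∀ s : Fin k, m (j, s) = m' (j, s)) →
        (∀ j ∈ T, ∀ s : Fin k, p (j, s) = p' (j, s)) →
        m = m') ∧
    -- (2) exact regeneration of systematic node N(1,i)
    (∀ (m m' p p' : Fin k × Fin k → F), p = G.mulVec m → p' = G.mulVec m' →
      ∀ i : Fin k,
        (∀ j : Fin k, j ≠ i → ∀ s : Fin k, m (j, s) = m' (j, s)) →
        (∀ j : Fin k, p (j, ⟨k - 1, by omega⟩) = p' (j, ⟨k - 1, by omega⟩)) →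
        m = m') ∧
    -- (3) exact regeneration of parity node N(2,i)
    (∀ (m m' p p' : Fin k × Fin k → F), p = G.mulVec m → p' = G.mulVec m' →
      ∀ i : Fin k,
        (∀ j : Fin k, m (j, ⟨k - 1, by omega⟩) = m' (j, ⟨k - 1, by omega⟩)) →
        (∀ j : Fin k, j ≠ i → ∀ s : Fin k, p (j, s) = p' (j, s)) →
        m = m') := by
  refine ⟨?_, ?_, ?_⟩
  · -- (1)
    intro m m' p p' hp hp' S T hST hmS hpT
    have hS : S.card ≤ k := by
      have := Finset.card_le_card (Finset.subset_univ S)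
      simpa using this
    apply cauchy_msr_helper x y hx hy hxy G hGdef m m' (T ×ˢ univ) (Sᶜ ×ˢ univ)
    · simp only [Finset.card_product, Finset.card_compl, Finset.card_univ, Fintype.card_fin]
      have hT : T.card = k - S.card := by omega
      rw [hT]
    · rintro ⟨b1, b2⟩ hb
      simp only [Finset.mem_product, Finset.mem_compl, Finset.mem_univ, and_true,
        not_not] at hb
      exact hmS b1 hb b2
    · rintro ⟨r1, r2⟩ hr
      simp only [Finset.mem_product, Finset.mem_univ, and_true] at hr
      rw [← hp, ← hp']
      exact hpT r1 hr r2
  · -- (2)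
    intro m m' p p' hp hp' i hm hpar
    apply cauchy_msr_helper x y hx hy hxy G hGdef m m'
      (univ ×ˢ {(⟨k - 1, by omega⟩ : Fin k)}) ({i} ×ˢ univ)
    · simp
    · rintro ⟨b1, b2⟩ hb
      simp only [Finset.mem_product, Finset.mem_singleton, Finset.mem_univ, true_and,
        and_true] at hb
      exact hm b1 hb b2
    · rintro ⟨r1, r2⟩ hr
      simp only [Finset.mem_product, Finset.mem_singleton, Finset.mem_univ, true_and] at hr
      rw [← hp, ← hp', hr]
      exact hpar r1
  · -- (3)
    intro m m' p p' hp hp' i hm hpar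
    apply cauchy_msr_helper x y hx hy hxy G hGdef m m'
      (({i}ᶜ : Finset (Fin k)) ×ˢ univ) (univ ×ˢ ({(⟨k - 1, by omega⟩ : Fin k)}ᶜ))
    · simp only [Finset.card_product, Finset.card_compl, Finset.card_univ, Fintype.card_fin,
        Finset.card_singleton]
      ring
    · rintro ⟨b1, b2⟩ hb
      simp only [Finset.mem_product, Finset.mem_compl, Finset.mem_singleton, Finset.mem_univ,
        true_and, not_not] at hb
      rw [hb]
      exact hm b1
    · rintro ⟨r1, r2⟩ hr
      simp only [Finset.mem_product, Finset.mem_compl, Finset.mem_singleton, Finset.mem_univ,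
        and_true] at hr
      rw [← hp, ← hp']
      exact hpar r1 hr r2
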